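/- Assume p is odd, write q = p^s, and let A ⊆ V_R ∩ F_q be a maximal totally isotropic F_p-subspace with respect to ω_R, with F_R(x) := Π_{α∈A}(x−α). Let a(x) ∈ F_q[x] be an additive polynomial with x^q − x = a(F_R(x)). For t ∈ F_q and x ∈ F̄ with F_R(x) = t, set b(x,t) := Σ_{i=0}^{s−1} (x R(x))^{p^i} − f_R(x, x^q − x). Then: (i) b(x,t) does not depend on the choice of x with F_R(x) = t (write b(t) for this common value); (ii) E_R(a(t)) = 0 and b(t)^p − b(t) = a(t)·R(a(t)), so that (a(t), b(t)) ∈ H_R with first coordinate in A. -/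

import Mathlib

open Finset Polynomial

/-- The additive polynomial `R(x) = ∑_{i=0}^e a_i x^{p^i}`, evaluated in any commutative ring. -/
def Rgen {A : Type*} [CommRing A] (p e : ℕ) (a : ℕ → A) (x : A) : A :=
  ∑ i ∈ Finset.range (e + 1), a i * x ^ p ^ i

/-- `E_R(x) = R(x)^{p^e} + ∑_{i=0}^e (a_i x)^{p^{e-i}}`. -/
def Egen {A : Type*} [CommRing A] (p e : ℕ) (a : ℕ → A) (x : A) : A :=
  Rgen p e a x ^ p ^ e + ∑ i ∈ Finset.range (e + 1), (a i * x) ^ p ^ (e - i)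

/-- `f_R(x,y) = -∑_{i=0}^{e-1} ( ∑_{j=0}^{e-i-1} (a_i x^{p^i} y)^{p^j} + (x R(y))^{p^i} )`. -/
def fgen {A : Type*} [CommRing A] (p e : ℕ) (a : ℕ → A) (x y : A) : A :=
  -∑ i ∈ Finset.range e,
    ((∑ j ∈ Finset.range (e - i), (a i * x ^ p ^ i * y) ^ p ^ j) + (x * Rgen p e a y) ^ p ^ i)

/-- The set `H_R = {(a,b) : E_R(a) = 0, b^p - b = a R(a)}`. -/
def Hset {K : Type*} [CommRing K] (p e : ℕ) (a : ℕ → K) : Set (K × K) :=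
  {h | Egen p e a h.1 = 0 ∧ h.2 ^ p - h.2 = h.1 * Rgen p e a h.1}

/-- The group law `(a,b)·(a',b') = (a+a', b+b'+f_R(a,a'))` on `H_R`. -/
def Hmul {K : Type*} [CommRing K] (p e : ℕ) (a : ℕ → K) (h h' : K × K) : K × K :=
  (h.1 + h'.1, h.2 + h'.2 + fgen p e a h.1 h'.1)


/-!
Everything rests on the identity `f_R(x,y)^p - f_R(x,y) = x R(y) + y R(x) - x^{p^e} E_R(y)`,
valid in any ring of characteristic `p₀`. Summing its Frobenius twists `(·)^{p^i}`, `i < s`,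
telescopes to `(·)^q - (·)`. For `α ∈ A` (so `E_R(α) = 0` and `α^q = α`) this shows that the trace
`∑ (α R(α))^{p^i}` is `(f_R(α,α)^q - f_R(α,α)) / 2 = 0` and that the polar term
`∑ (y R(α) + α R(y))^{p^i}` is `f_R(y^q - y, α)`. The fibres of `F_R` are cosets of `A`, so two
solutions of `F_R(x) = t` differ by some `α ∈ A`, and the values of `b` differ by
`f_R(T, α) - f_R(α, T) = 0` with `T = y^q - y ∈ A`, by isotropy. Applying the identity with
`y = T` and `E_R(T) = 0` gives `b^p - b = T R(T)`.
-/

section Frobenius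

variable {K : Type*} [CommRing K] {p₀ n p : ℕ} [ExpChar K p₀]

theorem pow_pow_eq_iterateFrobenius (hpn : p = p₀ ^ n) (m : ℕ) (x : K) :
    x ^ p ^ m = iterateFrobenius K p₀ (n * m) x := by
  rw [iterateFrobenius_def, hpn, ← pow_mul]

theorem pow_eq_iterateFrobenius (hpn : p = p₀ ^ n) (x : K) :
    x ^ p = iterateFrobenius K p₀ n x := by
  rw [iterateFrobenius_def, hpn]

theorem add_pow_pow (hpn : p = p₀ ^ n) (m : ℕ) (u v : K) :
    (u + v) ^ p ^ m = u ^ p ^ m + v ^ p ^ m := by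
  simp only [pow_pow_eq_iterateFrobenius hpn, map_add]

theorem sub_pow_pow (hpn : p = p₀ ^ n) (m : ℕ) (u v : K) :
    (u - v) ^ p ^ m = u ^ p ^ m - v ^ p ^ m := by
  simp only [pow_pow_eq_iterateFrobenius hpn, map_sub]

theorem sum_range_pow_pow_sub_self (hpn : p = p₀ ^ n) (k : ℕ) (w : K) :
    ∑ i ∈ range k, (w ^ p - w) ^ p ^ i = w ^ p ^ k - w := by
  have hterm : ∀ i ∈ range k, (w ^ p - w) ^ p ^ i = w ^ p ^ (i + 1) - w ^ p ^ i := by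
    intro i _
    rw [sub_pow_pow hpn, ← pow_mul, ← pow_succ']
  rw [sum_congr rfl hterm, sum_range_sub (w ^ p ^ ·), pow_zero, pow_one]

theorem pow_sub_self_sum_range_pow_pow (hpn : p = p₀ ^ n) (k : ℕ) (u : K) :
    (∑ i ∈ range k, u ^ p ^ i) ^ p - ∑ i ∈ range k, u ^ p ^ i = u ^ p ^ k - u := by
  have hterm : ∀ i ∈ range k, (u ^ p ^ i) ^ p - u ^ p ^ i = u ^ p ^ (i + 1) - u ^ p ^ i := by
    intro i _
    rw [← pow_mul, ← pow_succ]
  rw [pow_eq_iterateFrobenius hpn, map_sum]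
  simp only [← pow_eq_iterateFrobenius hpn]
  rw [← sum_sub_distrib, sum_congr rfl hterm, sum_range_sub (u ^ p ^ ·), pow_zero, pow_one]

theorem Rgen_add (hpn : p = p₀ ^ n) (e : ℕ) (c : ℕ → K) (u v : K) :
    Rgen p e c (u + v) = Rgen p e c u + Rgen p e c v := by
  simp only [Rgen, add_pow_pow hpn, mul_add, sum_add_distrib]

theorem fgen_add_left (hpn : p = p₀ ^ n) (e : ℕ) (c : ℕ → K) (u v y : K) :
    fgen p e c (u + v) y = fgen p e c u y + fgen p e c v y := by
  simp only [fgen, add_pow_pow hpn, mul_add, add_mul, sum_add_distrib]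
  ring

theorem map_Rgen {L : Type*} [CommRing L] (φ : K →+* L) (p e : ℕ) (c : ℕ → K) (x : K) :
    φ (Rgen p e c x) = Rgen p e (φ ∘ c) (φ x) := by
  simp only [Rgen, map_sum, map_mul, map_pow, Function.comp_apply]

theorem map_fgen {L : Type*} [CommRing L] (φ : K →+* L) (p e : ℕ) (c : ℕ → K) (x y : K) :
    φ (fgen p e c x y) = fgen p e (φ ∘ c) (φ x) (φ y) := by
  simp only [fgen, map_neg, map_sum, map_add, map_mul, map_pow, map_Rgen]
  rfl

theorem fgen_pow_sub_self (hpn : p = p₀ ^ n) (e : ℕ) (c : ℕ → K) (x y : K) :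
    fgen p e c x y ^ p - fgen p e c x y =
      x * Rgen p e c y + y * Rgen p e c x - x ^ p ^ e * Egen p e c y := by
  set r := x * Rgen p e c y
  set v : ℕ → K := fun i => c i * x ^ p ^ i * y
  set S := ∑ i ∈ range e, ((∑ j ∈ range (e - i), v i ^ p ^ j) + r ^ p ^ i)
  have hterm : ∀ i ∈ range e,
      ((∑ j ∈ range (e - i), v i ^ p ^ j) + r ^ p ^ i) ^ p
        - ((∑ j ∈ range (e - i), v i ^ p ^ j) + r ^ p ^ i)
        = (v i ^ p ^ (e - i) - v i) + (r ^ p ^ (i + 1) - r ^ p ^ i) := by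
    intro i _
    rw [← pow_sub_self_sum_range_pow_pow hpn, pow_eq_iterateFrobenius hpn, map_add,
      ← pow_eq_iterateFrobenius hpn, ← pow_eq_iterateFrobenius hpn, ← pow_mul, ← pow_succ]
    ring
  have hS : S ^ p - S = (∑ i ∈ range e, v i ^ p ^ (e - i)) - ∑ i ∈ range e, v i
      + (r ^ p ^ e - r) := by
    rw [pow_eq_iterateFrobenius hpn, map_sum]
    simp only [← pow_eq_iterateFrobenius hpn]
    rw [← sum_sub_distrib, sum_congr rfl hterm, sum_add_distrib, sum_sub_distrib,
      sum_range_sub (r ^ p ^ ·), pow_zero, pow_one]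
  have hv : ∑ i ∈ range e, v i = y * (Rgen p e c x - c e * x ^ p ^ e) := by
    rw [Rgen, sum_range_succ, add_sub_cancel_right, mul_sum]
    exact sum_congr rfl fun i _ => by ring
  have hv' : ∑ i ∈ range e, v i ^ p ^ (e - i)
      = x ^ p ^ e * (∑ i ∈ range (e + 1), (c i * y) ^ p ^ (e - i) - c e * y) := by
    rw [sum_range_succ, Nat.sub_self, pow_zero, pow_one, add_sub_cancel_right, mul_sum]
    refine sum_congr rfl fun i hi => ?_
    rw [show v i = c i * y * x ^ p ^ i by ring, mul_pow, ← pow_mul, ← pow_add,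
      Nat.add_sub_cancel' (mem_range.mp hi).le, mul_comm]
  have hf : fgen p e c x y ^ p - fgen p e c x y = -(S ^ p - S) := by
    rw [fgen, pow_eq_iterateFrobenius hpn, map_neg, ← pow_eq_iterateFrobenius hpn]
    ring
  rw [hf, hS, hv, hv', Egen, mul_pow]
  ring

theorem Rgen_pow_pow (hpn : p = p₀ ^ n) {e m : ℕ} {c : ℕ → K} (hc : ∀ i, c i ^ p ^ m = c i)
    (x : K) : Rgen p e c x ^ p ^ m = Rgen p e c (x ^ p ^ m) := by
  simp only [pow_pow_eq_iterateFrobenius hpn, map_Rgen] at hc ⊢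
  congr 1
  exact funext hc

theorem fgen_pow_pow (hpn : p = p₀ ^ n) {e m : ℕ} {c : ℕ → K} (hc : ∀ i, c i ^ p ^ m = c i)
    (x y : K) : fgen p e c x y ^ p ^ m = fgen p e c (x ^ p ^ m) (y ^ p ^ m) := by
  simp only [pow_pow_eq_iterateFrobenius hpn, map_fgen] at hc ⊢
  congr 1
  exact funext hc

/-- The paper's `b(x, t)`, with `q = p ^ s`. -/
def bgen (p e s : ℕ) (c : ℕ → K) (x : K) : K :=
  (∑ i ∈ range s, (x * Rgen p e c x) ^ p ^ i) - fgen p e c x (x ^ p ^ s - x)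

variable {e s : ℕ} {c : ℕ → K}

theorem bgen_pow_sub_self (hpn : p = p₀ ^ n) (hc : ∀ i, c i ^ p ^ s = c i) {x : K}
    (hE : Egen p e c (x ^ p ^ s - x) = 0) :
    bgen p e s c x ^ p - bgen p e s c x = (x ^ p ^ s - x) * Rgen p e c (x ^ p ^ s - x) := by
  set T := x ^ p ^ s - x
  have hf := fgen_pow_sub_self hpn e c x T
  rw [hE, mul_zero, sub_zero] at hf
  have hsum := pow_sub_self_sum_range_pow_pow hpn s (x * Rgen p e c x)
  have hxq : (x * Rgen p e c x) ^ p ^ s = (x + T) * (Rgen p e c x + Rgen p e c T) := by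
    rw [mul_pow, Rgen_pow_pow hpn hc, ← Rgen_add hpn, add_sub_cancel]
  rw [bgen, pow_eq_iterateFrobenius hpn, map_sub]
  simp only [← pow_eq_iterateFrobenius hpn]
  linear_combination hsum + hxq - hf

theorem sum_range_pow_pow_mul_Rgen_self_eq_zero [IsDomain K] (hpn : p = p₀ ^ n)
    (h2 : (2 : K) ≠ 0) (hc : ∀ i, c i ^ p ^ s = c i) {α : K} (hα : α ^ p ^ s = α)
    (hE : Egen p e c α = 0) : ∑ i ∈ range s, (α * Rgen p e c α) ^ p ^ i = 0 := by
  have hf : fgen p e c α α ^ p - fgen p e c α α = 2 * (α * Rgen p e c α) := by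
    rw [fgen_pow_sub_self hpn, hE]
    ring
  have hsum := sum_range_pow_pow_sub_self hpn s (fgen p e c α α)
  rw [hf, fgen_pow_pow hpn hc, hα, sub_self] at hsum
  have h2pow : ∀ i, (2 : K) ^ p ^ i = 2 := fun i => by
    rw [pow_pow_eq_iterateFrobenius hpn, map_ofNat]
  rw [sum_congr rfl fun i _ => by rw [mul_pow, h2pow], ← mul_sum] at hsum
  exact (mul_eq_zero.mp hsum).resolve_left h2

theorem sum_range_pow_pow_polar_eq_fgen (hpn : p = p₀ ^ n) (hc : ∀ i, c i ^ p ^ s = c i)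
    {α : K} (hα : α ^ p ^ s = α) (hE : Egen p e c α = 0) (y : K) :
    ∑ i ∈ range s, (y * Rgen p e c α + α * Rgen p e c y) ^ p ^ i
      = fgen p e c (y ^ p ^ s - y) α := by
  have hf := fgen_pow_sub_self hpn e c y α
  rw [hE, mul_zero, sub_zero] at hf
  rw [← hf, sum_range_pow_pow_sub_self hpn, fgen_pow_pow hpn hc, hα,
    ← add_sub_cancel y (y ^ p ^ s), fgen_add_left hpn, add_sub_cancel]
  ring

theorem bgen_add_of_fgen_comm [IsDomain K] (hpn : p = p₀ ^ n) (h2 : (2 : K) ≠ 0)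
    (hc : ∀ i, c i ^ p ^ s = c i) {α : K} (hα : α ^ p ^ s = α) (hE : Egen p e c α = 0) (y : K)
    (hcomm : fgen p e c (y ^ p ^ s - y) α = fgen p e c α (y ^ p ^ s - y)) :
    bgen p e s c (y + α) = bgen p e s c y := by
  have hT : (y + α) ^ p ^ s - (y + α) = y ^ p ^ s - y := by
    rw [add_pow_pow hpn, hα]
    ring
  have hsplit : ∀ i ∈ range s, ((y + α) * Rgen p e c (y + α)) ^ p ^ i
      = (y * Rgen p e c y) ^ p ^ i + (y * Rgen p e c α + α * Rgen p e c y) ^ p ^ i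
        + (α * Rgen p e c α) ^ p ^ i := by
    intro i _
    rw [← add_pow_pow hpn, ← add_pow_pow hpn, Rgen_add hpn]
    ring
  rw [bgen, bgen, hT, sum_congr rfl hsplit, sum_add_distrib, sum_add_distrib,
    sum_range_pow_pow_polar_eq_fgen hpn hc hα hE,
    sum_range_pow_pow_mul_Rgen_self_eq_zero hpn h2 hc hα hE, fgen_add_left hpn]
  linear_combination hcomm

end Frobenius

section Fibres

variable {K : Type*} [CommRing K] {A : Finset K}

theorem eval_prod_X_sub_C_add (hsub : ∀ x ∈ A, ∀ y ∈ A, x - y ∈ A) {α : K} (hα : α ∈ A)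
    (v : K) : (∏ β ∈ A, (X - C β)).eval (v + α) = (∏ β ∈ A, (X - C β)).eval v := by
  simp only [eval_prod, eval_sub, eval_X, eval_C]
  have hneg : -α ∈ A := by simpa using hsub _ (hsub α hα α hα) α hα
  exact prod_nbij' (· - α) (· + α) (fun β hβ => hsub β hβ α hα)
    (fun β hβ => by simpa using hsub β hβ _ hneg) (fun β _ => by simp) (fun β _ => by simp)
    (fun β _ => by ring)

theorem sub_mem_of_eval_prod_X_sub_C_eq [IsDomain K] (h0 : 0 ∈ A)
    (hsub : ∀ x ∈ A, ∀ y ∈ A, x - y ∈ A) {u v : K}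
    (h : (∏ β ∈ A, (X - C β)).eval u = (∏ β ∈ A, (X - C β)).eval v) : u - v ∈ A := by
  set P := ∏ β ∈ A, (X - C β)
  have hdeg : 0 < P.degree := by
    rw [← natDegree_pos_iff_degree_pos, natDegree_finsetProd_X_sub_C_eq_card]
    exact card_pos.mpr ⟨0, h0⟩
  have hle : (A.map (addLeftEmbedding v)).val ≤ (P - C (P.eval v)).roots := by
    refine (Multiset.le_iff_subset (A.map _).nodup).2 fun w hw => ?_
    obtain ⟨α, hα, rfl⟩ := mem_map.1 hw
    exact (mem_roots_sub_C hdeg).2 (eval_prod_X_sub_C_add hsub hα v)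
  -- the `#A` translates `v + α` already exhaust the roots of the degree-`#A` polynomial
  have hroots := Multiset.eq_of_le_of_card_le hle <| by
    simpa [P] using card_roots_sub_C' (a := P.eval v) hdeg
  have hu : u ∈ (A.map (addLeftEmbedding v)).val := hroots ▸ (mem_roots_sub_C hdeg).2 h
  obtain ⟨α, hα, rfl⟩ := mem_map.1 hu
  simpa using hα

theorem map_eval_prod_X_sub_C (φ : K →+* K) (hφ : ∀ α ∈ A, φ α = α) (x : K) :
    φ ((∏ β ∈ A, (X - C β)).eval x) = (∏ β ∈ A, (X - C β)).eval (φ x) := by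
  simp only [eval_prod, eval_sub, eval_X, eval_C, map_prod, map_sub]
  exact prod_congr rfl fun β hβ => by rw [hφ β hβ]

theorem pow_pow_sub_self_mem_of_eval_prod_X_sub_C [IsDomain K] {p₀ n p m : ℕ} [ExpChar K p₀]
    (hpn : p = p₀ ^ n) (h0 : 0 ∈ A) (hsub : ∀ x ∈ A, ∀ y ∈ A, x - y ∈ A)
    (hA : ∀ α ∈ A, α ^ p ^ m = α) {x : K}
    (hx : (∏ β ∈ A, (X - C β)).eval x ^ p ^ m = (∏ β ∈ A, (X - C β)).eval x) :
    x ^ p ^ m - x ∈ A := by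
  have hfix : ∀ α ∈ A, iterateFrobenius K p₀ (n * m) α = α := fun α hα => by
    rw [← pow_pow_eq_iterateFrobenius hpn, hA α hα]
  refine sub_mem_of_eval_prod_X_sub_C_eq h0 hsub ?_
  rw [pow_pow_eq_iterateFrobenius hpn, ← map_eval_prod_X_sub_C _ hfix,
    ← pow_pow_eq_iterateFrobenius hpn, hx]

end Fibres

theorem statement14_general {F K : Type*} [Field F] [Fintype F] [Field K] [IsAlgClosed K]
    [Algebra F K]
    (p₀ n p s q e : ℕ) (hp₀ : p₀.Prime) (hodd : Odd p₀) [CharP F p₀]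
    (hpn : p = p₀ ^ n) (hq : q = p ^ s)
    (hcard : Fintype.card F = q) (a : ℕ → F)
    -- `A ⊆ V_R ∩ F_q` a totally isotropic `F_p`-subspace with `#A = p^e` (i.e. maximal)
    (A : Finset K) (h0A : (0 : K) ∈ A)
    (hadd : ∀ x ∈ A, ∀ y ∈ A, x + y ∈ A)
    (hsmul : ∀ c : K, c ^ p = c → ∀ x ∈ A, c * x ∈ A)
    (hAV : ∀ x ∈ A, Egen p e (fun i => algebraMap F K (a i)) x = 0)
    (hAF : ∀ x ∈ A, ∃ y : F, algebraMap F K y = x)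
    (hiso : ∀ x ∈ A, ∀ y ∈ A, fgen p e (fun i => algebraMap F K (a i)) x y =
      fgen p e (fun i => algebraMap F K (a i)) y x)
    -- the additive polynomial `a(x) ∈ F_q[x]` with `x^q − x = a(F_R(x))`
    (aQ : Polynomial F)
    (haQ : ∀ x : K, x ^ q - x =
      (aQ.map (algebraMap F K)).eval ((∏ α ∈ A, (Polynomial.X - Polynomial.C α)).eval x)) :
    let aK : ℕ → K := fun i => algebraMap F K (a i)
    let FR : Polynomial K := ∏ α ∈ A, (Polynomial.X - Polynomial.C α)
    let bval : K → K := fun x =>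
      (∑ i ∈ Finset.range s, (x * Rgen p e aK x) ^ p ^ i) - fgen p e aK x (x ^ q - x)
    let aval : F → K := fun t => (aQ.map (algebraMap F K)).eval (algebraMap F K t)
    -- (i) `b(x,t)` is independent of the choice of `x` with `F_R(x) = t`
    (∀ t : F, ∀ x y : K, FR.eval x = algebraMap F K t → FR.eval y = algebraMap F K t →
      bval x = bval y) ∧
    -- (ii) `(a(t), b(t)) ∈ H_R` with first coordinate in `A`
    (∀ t : F, aval t ∈ A ∧ Egen p e aK (aval t) = 0 ∧
      ∀ x : K, FR.eval x = algebraMap F K t →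
        bval x ^ p - bval x = aval t * Rgen p e aK (aval t)) := by
  intro aK FR bval aval
  subst hq
  have : Fact p₀.Prime := ⟨hp₀⟩
  have : CharP K p₀ := charP_of_injective_algebraMap (algebraMap F K).injective p₀
  have h2 : (2 : K) ≠ 0 := Ring.two_ne_zero <| by
    rw [ringChar.eq K p₀]
    rintro rfl
    exact Nat.not_odd_iff_even.mpr even_two hodd
  have hFq : ∀ t : F, algebraMap F K t ^ p ^ s = algebraMap F K t := fun t => by
    rw [← map_pow, ← hcard, FiniteField.pow_card]
  have hAq : ∀ α ∈ A, α ^ p ^ s = α := fun α hα => by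
    obtain ⟨t, rfl⟩ := hAF α hα
    exact hFq t
  have hsub : ∀ x ∈ A, ∀ y ∈ A, x - y ∈ A := fun x hx y hy => by
    have hneg := hsmul (-1) (Odd.neg_one_pow (hpn ▸ hodd.pow)) y hy
    simpa [sub_eq_add_neg] using hadd x hx _ hneg
  have hT : ∀ t x, FR.eval x = algebraMap F K t → x ^ p ^ s - x = aval t ∧ aval t ∈ A := by
    intro t x hx
    have hval : x ^ p ^ s - x = aval t := by rw [haQ, hx]
    exact ⟨hval, hval ▸ pow_pow_sub_self_mem_of_eval_prod_X_sub_C hpn h0A hsub hAq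
      (by rw [hx, hFq])⟩
  refine ⟨fun t x y hx hy => ?_, fun t => ?_⟩
  · obtain ⟨hTy, hmem⟩ := hT t y hy
    have hα : x - y ∈ A := sub_mem_of_eval_prod_X_sub_C_eq h0A hsub (hx.trans hy.symm)
    calc bval x = bgen p e s aK (y + (x - y)) := by rw [add_sub_cancel]; rfl
      _ = bval y := bgen_add_of_fgen_comm hpn h2 (fun i => hFq (a i)) (hAq _ hα) (hAV _ hα) y
            (by rw [hTy]; exact hiso _ hmem _ hα)
  · obtain ⟨x₀, hx₀⟩ := IsAlgClosed.eval_surjective (p := FR)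
      (by simpa [FR] using (card_pos.mpr ⟨0, h0A⟩).ne') (algebraMap F K t)
    have hmem := (hT t x₀ hx₀).2
    refine ⟨hmem, hAV _ hmem, fun x hx => ?_⟩
    obtain ⟨hTx, -⟩ := hT t x hx
    rw [← hTx]
    exact bgen_pow_sub_self hpn (fun i => hFq (a i)) (hTx ▸ hAV _ hmem)

/-- with `x^q − x = a(F_R(x))` for an additive `a(x) ∈ F_q[x]`, the value
`b(x,t) := Σ_{i=0}^{s−1}(xR(x))^{p^i} − f_R(x, x^q − x)` depends only on `t = F_R(x)`,
and `(a(t), b(t)) ∈ H_R` with `a(t) ∈ A`. -/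
theorem statement14 {F K : Type*} [Field F] [Fintype F] [Field K] [IsAlgClosed K]
    [DecidableEq K] [Algebra F K]
    (p₀ n p s q e : ℕ) (hp₀ : p₀.Prime) (hodd : Odd p₀) [CharP F p₀]
    (hn : 0 < n) (hpn : p = p₀ ^ n) (hs : 0 < s) (hq : q = p ^ s)
    (hcard : Fintype.card F = q) (a : ℕ → F) (hae : a e ≠ 0)
    -- `A ⊆ V_R ∩ F_q` a totally isotropic `F_p`-subspace with `#A = p^e` (i.e. maximal)
    (A : Finset K) (h0A : (0 : K) ∈ A)
    (hadd : ∀ x ∈ A, ∀ y ∈ A, x + y ∈ A)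
    (hsmul : ∀ c : K, c ^ p = c → ∀ x ∈ A, c * x ∈ A)
    (hAV : ∀ x ∈ A, Egen p e (fun i => algebraMap F K (a i)) x = 0)
    (hAF : ∀ x ∈ A, ∃ y : F, algebraMap F K y = x)
    (hiso : ∀ x ∈ A, ∀ y ∈ A, fgen p e (fun i => algebraMap F K (a i)) x y =
      fgen p e (fun i => algebraMap F K (a i)) y x)
    (hcardA : A.card = p ^ e)
    -- the additive polynomial `a(x) ∈ F_q[x]` with `x^q − x = a(F_R(x))`
    (aQ : Polynomial F)
    (haQadd : ∀ u v : K, (aQ.map (algebraMap F K)).eval (u + v) =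
      (aQ.map (algebraMap F K)).eval u + (aQ.map (algebraMap F K)).eval v)
    (haQ : ∀ x : K, x ^ q - x =
      (aQ.map (algebraMap F K)).eval ((∏ α ∈ A, (Polynomial.X - Polynomial.C α)).eval x)) :
    let aK : ℕ → K := fun i => algebraMap F K (a i)
    let FR : Polynomial K := ∏ α ∈ A, (Polynomial.X - Polynomial.C α)
    let bval : K → K := fun x =>
      (∑ i ∈ Finset.range s, (x * Rgen p e aK x) ^ p ^ i) - fgen p e aK x (x ^ q - x)
    let aval : F → K := fun t => (aQ.map (algebraMap F K)).eval (algebraMap F K t)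
    -- (i) `b(x,t)` is independent of the choice of `x` with `F_R(x) = t`
    (∀ t : F, ∀ x y : K, FR.eval x = algebraMap F K t → FR.eval y = algebraMap F K t →
      bval x = bval y) ∧
    -- (ii) `(a(t), b(t)) ∈ H_R` with first coordinate in `A`
    (∀ t : F, aval t ∈ A ∧ Egen p e aK (aval t) = 0 ∧
      ∀ x : K, FR.eval x = algebraMap F K t →
        bval x ^ p - bval x = aval t * Rgen p e aK (aval t)) :=
  statement14_general p₀ n p s q e hp₀ hodd hpn hq hcard a A h0A hadd hsmul hAV hAF hiso aQ haQ
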